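/- arXiv:2007.06801 — 2 statements merged into one kernel-verified Lean document; each statement's English description precedes it below -/
import Mathlib

section
/- For two policies π and π' in a discounted MDP, the difference in expected discounted return satisfies J(π') − J(π) = E_{τ∼π'}[Σ_{t=0}^∞ γ^t A_π(s_t, a_t)], where the expectation is over trajectories generated by π' from the initial state distribution, and A_π(s,a) = Q_π(s,a) − V_π(s) is the advantage function of π. -/
open Finset

/-- **Performance difference lemma.** In a finite discounted MDP, the difference in
expected discounted return of two policies `π'` and `π` equals the expected advantage
of `π` accumulated along trajectories of `π'`, expressed via the (unnormalized)
discounted state-visitation frequency `ρ'` of `π'`: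
`J(π') − J(π) = Σ_s ρ_{π'}(s) Σ_a π'(a|s) A_π(s,a)`. -/
theorem performance_difference_lemma
    {S A : Type*} [Fintype S] [Fintype A]
    (P : S → A → S → ℝ) (R : S → A → ℝ) (γ : ℝ) (μ : S → ℝ)
    (π π' : S → A → ℝ) (V V' ρ' : S → ℝ)
    (hγ : 0 < γ) (hγ1 : γ < 1)
    (hP0 : ∀ s a s', 0 ≤ P s a s') (hP1 : ∀ s a, ∑ s', P s a s' = 1)
    (hμ0 : ∀ s, 0 ≤ μ s) (hμ1 : ∑ s, μ s = 1)
    (hπ0 : ∀ s a, 0 ≤ π s a) (hπ1 : ∀ s, ∑ a, π s a = 1)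
    (hπ'0 : ∀ s a, 0 ≤ π' s a) (hπ'1 : ∀ s, ∑ a, π' s a = 1)
    -- Bellman equations defining the value functions of π and π'
    (hV : ∀ s, V s = ∑ a, π s a * (R s a + γ * ∑ s', P s a s' * V s'))
    (hV' : ∀ s, V' s = ∑ a, π' s a * (R s a + γ * ∑ s', P s a s' * V' s'))
    -- discounted state-visitation frequency of π' from initial distribution μ
    (hρ' : ∀ s, ρ' s = μ s + γ * ∑ s', ∑ a, ρ' s' * π' s' a * P s' a s)
    -- Q and advantage functions of π
    (Q Adv : S → A → ℝ)
    (hQ : ∀ s a, Q s a = R s a + γ * ∑ s', P s a s' * V s')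
    (hAdv : ∀ s a, Adv s a = Q s a - V s) :
    (∑ s, μ s * V' s) - (∑ s, μ s * V s)
      = ∑ s, ρ' s * ∑ a, π' s a * Adv s a := by
  set D : S → ℝ := fun s => V' s - V s with hD
  -- per-state identity for the expected advantage under π'
  have key : ∀ s, ∑ a, π' s a * Adv s a
      = D s - γ * ∑ a, π' s a * ∑ s', P s a s' * D s' := by
    intro s
    have e1 : ∀ a, π' s a * Adv s a
        = π' s a * (R s a + γ * ∑ s', P s a s' * V' s')
          - γ * (π' s a * ∑ s', P s a s' * D s')
          - π' s a * V s := by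
      intro a
      have h2 : ∑ s', P s a s' * V s'
          = (∑ s', P s a s' * V' s') - ∑ s', P s a s' * D s' := by
        rw [← Finset.sum_sub_distrib]
        exact Finset.sum_congr rfl fun s' _ => by simp [hD]; ring
      rw [hAdv, hQ, h2]; ring
    calc ∑ a, π' s a * Adv s a
        = (∑ a, π' s a * (R s a + γ * ∑ s', P s a s' * V' s'))
          - γ * ∑ a, π' s a * ∑ s', P s a s' * D s'
          - (∑ a, π' s a) * V s := by
          rw [Finset.sum_congr rfl fun a _ => e1 a, Finset.sum_sub_distrib,
            Finset.sum_sub_distrib, ← Finset.mul_sum, Finset.sum_mul]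
      _ = D s - γ * ∑ a, π' s a * ∑ s', P s a s' * D s' := by
          rw [← hV' s, hπ'1 s]; simp [hD]; ring
  -- expand ρ' once on the RHS
  have rho : ∑ s, ρ' s * D s
      = (∑ s, μ s * D s)
        + γ * ∑ s, (∑ s', ∑ a, ρ' s' * π' s' a * P s' a s) * D s := by
    calc ∑ s, ρ' s * D s
        = ∑ s, (μ s * D s + γ * ((∑ s', ∑ a, ρ' s' * π' s' a * P s' a s) * D s)) := by
          refine Finset.sum_congr rfl fun s _ => ?_
          rw [hρ' s]; ring
      _ = _ := by rw [Finset.sum_add_distrib, ← Finset.mul_sum]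
  -- swap the order of summation in the correction term
  have swap : ∑ s, ρ' s * ∑ a, π' s a * ∑ s', P s a s' * D s'
      = ∑ s', (∑ s, ∑ a, ρ' s * π' s a * P s a s') * D s' := by
    calc ∑ s, ρ' s * ∑ a, π' s a * ∑ s', P s a s' * D s'
        = ∑ s, ∑ a, ∑ s', ρ' s * π' s a * P s a s' * D s' := by
          refine Finset.sum_congr rfl fun s _ => ?_
          rw [Finset.mul_sum]
          refine Finset.sum_congr rfl fun a _ => ?_
          rw [Finset.mul_sum, Finset.mul_sum]
          exact Finset.sum_congr rfl fun s' _ => by ring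
      _ = ∑ s', ∑ s, ∑ a, ρ' s * π' s a * P s a s' * D s' := by
          rw [show (∑ s, ∑ a, ∑ s', ρ' s * π' s a * P s a s' * D s')
              = ∑ s, ∑ s', ∑ a, ρ' s * π' s a * P s a s' * D s' from
            Finset.sum_congr rfl fun s _ =>
              Finset.sum_comm (f := fun a s' => ρ' s * π' s a * P s a s' * D s')]
          exact Finset.sum_comm (f := fun s s' => ∑ a, ρ' s * π' s a * P s a s' * D s')
      _ = ∑ s', (∑ s, ∑ a, ρ' s * π' s a * P s a s') * D s' := by
          refine Finset.sum_congr rfl fun s' _ => ?_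
          rw [Finset.sum_mul]
          exact Finset.sum_congr rfl fun s _ => by rw [Finset.sum_mul]
  have main : ∑ s, ρ' s * ∑ a, π' s a * Adv s a = ∑ s, μ s * D s := by
    calc ∑ s, ρ' s * ∑ a, π' s a * Adv s a
        = ∑ s, (ρ' s * D s - γ * (ρ' s * ∑ a, π' s a * ∑ s', P s a s' * D s')) := by
          refine Finset.sum_congr rfl fun s _ => ?_
          rw [key s]; ring
      _ = (∑ s, ρ' s * D s)
          - γ * ∑ s, ρ' s * ∑ a, π' s a * ∑ s', P s a s' * D s' := by
          rw [Finset.sum_sub_distrib, ← Finset.mul_sum]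
      _ = ∑ s, μ s * D s := by rw [rho, swap]; ring
  rw [main, ← Finset.sum_sub_distrib]
  exact Finset.sum_congr rfl fun s _ => by simp [hD]; ring
end

section
/- (Policy improvement lower bound) Let π and π' be stationary policies in a discounted MDP, let ε = max_{s,a} |A_π(s,a)|, and let C = 4εγ/(1−γ)². Then J(π') − J(π) ≥ L_π(π') − C · max_s D_KL(π(·|s) ∥ π'(·|s)), where L_π(π') = Σ_s ρ_π(s) Σ_a π'(a|s) A_π(s,a) is the surrogate advantage computed under the discounted state visitation distribution ρ_π of π. -/
/-!
Write `x = V' - V`, `M_π` for the state-transition matrix of `π`, and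
`Ā(s) = Σ_a π'(a|s) A_π(s,a)`. Subtracting the Bellman equations gives `x = Ā + γ M_{π'} x`;
together with `ρ = μ + γ ρ M_π` this yields `J(π') - J(π) = μ·x = ρ·Ā + γ ρ·((M_{π'} - M_π) x)`,
where `ρ·Ā = L_π(π')`. Since `A_π` has mean zero under `π`, `|Ā(s)| ≤ εβ` with
`β = max_s ‖π'(·|s) - π(·|s)‖₁`, so `‖x‖_∞ ≤ εβ/(1-γ)`; the rows of `M_{π'} - M_π` have ℓ¹-norm
at most `β` and `‖ρ‖₁ ≤ 1/(1-γ)`, which bounds the error term by `γεβ²/(1-γ)²`. Finally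
`β² ≤ 4 max_s KL` via the Hellinger distance:
`(Σ|p-q|)² ≤ Σ(√p-√q)² · Σ(√p+√q)² ≤ 4 Σ(√p-√q)² ≤ 4 KL(p‖q)`, the last step by `log t ≥ 1 - 1/t`.
-/

open Finset Matrix

lemma sq_sqrt_sub_sqrt_le_mul_log_div_sub_add {p q : ℝ} (hp : 0 ≤ p) (hq : 0 < q) :
    (√p - √q) ^ 2 ≤ p * Real.log (p / q) - p + q := by
  rcases hp.eq_or_lt with rfl | hp
  · simp [Real.sq_sqrt hq.le]
  obtain ⟨a, ha, rfl⟩ : ∃ a, 0 < a ∧ p = a ^ 2 := ⟨√p, by positivity, (Real.sq_sqrt hp.le).symm⟩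
  obtain ⟨b, hb, rfl⟩ : ∃ b, 0 < b ∧ q = b ^ 2 := ⟨√q, by positivity, (Real.sq_sqrt hq.le).symm⟩
  have hlog : 1 - b / a ≤ Real.log (a / b) := by
    simpa only [inv_div] using Real.one_sub_inv_le_log_of_pos (div_pos ha hb)
  have hab : a ^ 2 * (1 - b / a) = a ^ 2 - a * b := by field_simp
  rw [Real.sqrt_sq ha.le, Real.sqrt_sq hb.le, ← div_pow, Real.log_pow]
  nlinarith [mul_le_mul_of_nonneg_left hlog (sq_nonneg a)]

theorem sq_sum_abs_sub_le_four_mul_sum_mul_log_div {ι : Type*} [Fintype ι] {p q : ι → ℝ}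
    (hp : ∀ i, 0 ≤ p i) (hq : ∀ i, 0 < q i) (hp1 : ∑ i, p i = 1) (hq1 : ∑ i, q i = 1) :
    (∑ i, |p i - q i|) ^ 2 ≤ 4 * ∑ i, p i * Real.log (p i / q i) := by
  have hfactor (i : ι) : |p i - q i| = |√(p i) - √(q i)| * (√(p i) + √(q i)) := by
    rw [← abs_of_nonneg (by positivity : 0 ≤ √(p i) + √(q i)), ← abs_mul,
      show (√(p i) - √(q i)) * (√(p i) + √(q i)) = √(p i) * √(p i) - √(q i) * √(q i) by ring,
      Real.mul_self_sqrt (hp i), Real.mul_self_sqrt (hq i).le]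
  have hsum_sq (i : ι) : (√(p i) + √(q i)) ^ 2 ≤ 2 * (p i + q i) := by
    nlinarith [sq_nonneg (√(p i) - √(q i)), Real.sq_sqrt (hp i), Real.sq_sqrt (hq i).le]
  have hhellinger (i : ι) : |√(p i) - √(q i)| ^ 2 ≤ p i * Real.log (p i / q i) - p i + q i := by
    rw [sq_abs]; exact sq_sqrt_sub_sqrt_le_mul_log_div_sub_add (hp i) (hq i)
  calc (∑ i, |p i - q i|) ^ 2 = (∑ i, |√(p i) - √(q i)| * (√(p i) + √(q i))) ^ 2 := by
        simp only [hfactor]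
    _ ≤ (∑ i, |√(p i) - √(q i)| ^ 2) * ∑ i, (√(p i) + √(q i)) ^ 2 := sum_mul_sq_le_sq_mul_sq _ _ _
    _ ≤ (∑ i, (p i * Real.log (p i / q i) - p i + q i)) * ∑ i, 2 * (p i + q i) := by
        gcongr with i
        · exact sum_nonneg fun i _ => (sq_nonneg _).trans (hhellinger i)
        · exact hhellinger i
        · exact hsum_sq i
    _ = 4 * ∑ i, p i * Real.log (p i / q i) := by
        rw [sum_add_distrib, sum_sub_distrib, ← mul_sum, sum_add_distrib, hp1, hq1]; ring

lemma abs_sum_mul_le_sum_abs_mul {ι : Type*} (s : Finset ι) (w g : ι → ℝ) {c : ℝ}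
    (hg : ∀ i ∈ s, |g i| ≤ c) : |∑ i ∈ s, w i * g i| ≤ (∑ i ∈ s, |w i|) * c := by
  calc |∑ i ∈ s, w i * g i| ≤ ∑ i ∈ s, |w i| * |g i| := by
        simpa only [abs_mul] using abs_sum_le_sum_abs (fun i => w i * g i) s
    _ ≤ ∑ i ∈ s, |w i| * c := sum_le_sum fun i hi => by gcongr; exact hg i hi
    _ = (∑ i ∈ s, |w i|) * c := (sum_mul ..).symm

lemma abs_dotProduct_le_norm_of_sum_eq_one {n : Type*} [Fintype n] {w : n → ℝ} (hw0 : ∀ i, 0 ≤ w i)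
    (hw1 : ∑ i, w i = 1) (v : n → ℝ) : |w ⬝ᵥ v| ≤ ‖v‖ := by
  simpa only [dotProduct, abs_of_nonneg (hw0 _), hw1, one_mul] using
    abs_sum_mul_le_sum_abs_mul univ w v fun i _ =>
      (Real.norm_eq_abs (v i)).symm.trans_le (norm_le_pi_norm v i)

section Stochastic

variable {n : Type*} [Fintype n] [DecidableEq n] {K : Matrix n n ℝ} {γ : ℝ}

lemma norm_mulVec_le_of_mem_rowStochastic (hK : K ∈ rowStochastic ℝ n) (v : n → ℝ) :
    ‖K *ᵥ v‖ ≤ ‖v‖ :=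
  (pi_norm_le_iff_of_nonneg (norm_nonneg v)).2 fun i =>
    abs_dotProduct_le_norm_of_sum_eq_one (fun _ => nonneg_of_mem_rowStochastic hK)
      (sum_row_of_mem_rowStochastic hK i) v

lemma sum_abs_vecMul_le_of_mem_rowStochastic (hK : K ∈ rowStochastic ℝ n) (ρ : n → ℝ) :
    ∑ j, |(ρ ᵥ* K) j| ≤ ∑ i, |ρ i| :=
  calc ∑ j, |(ρ ᵥ* K) j| ≤ ∑ j, ∑ i, |ρ i| * K i j := sum_le_sum fun j _ => by
        simpa only [vecMul, dotProduct, abs_mul, abs_of_nonneg (nonneg_of_mem_rowStochastic hK)]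
          using abs_sum_le_sum_abs (fun i => ρ i * K i j) univ
    _ = ∑ i, |ρ i| := by
        rw [sum_comm]; simp only [← mul_sum, sum_row_of_mem_rowStochastic hK, mul_one]

lemma norm_le_div_of_eq_add_smul_mulVec (hK : K ∈ rowStochastic ℝ n) (hγ0 : 0 ≤ γ)
    (hγ1 : γ < 1) {x f : n → ℝ} (hx : x = f + γ • (K *ᵥ x)) : ‖x‖ ≤ ‖f‖ / (1 - γ) := by
  have : ‖x‖ ≤ ‖f‖ + γ * ‖x‖ :=
    calc ‖x‖ = ‖f + γ • (K *ᵥ x)‖ := congrArg norm hx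
      _ ≤ ‖f‖ + ‖γ • (K *ᵥ x)‖ := norm_add_le _ _
      _ ≤ ‖f‖ + γ * ‖x‖ := by
        rw [norm_smul, Real.norm_of_nonneg hγ0]
        gcongr
        exact norm_mulVec_le_of_mem_rowStochastic hK x
  rw [le_div_iff₀ (by linarith)]
  linarith

lemma sum_abs_le_div_of_eq_add_smul_vecMul (hK : K ∈ rowStochastic ℝ n) (hγ0 : 0 ≤ γ)
    (hγ1 : γ < 1) {ρ μ : n → ℝ} (hρ : ρ = μ + γ • (ρ ᵥ* K)) :
    ∑ i, |ρ i| ≤ (∑ i, |μ i|) / (1 - γ) := by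
  have : ∑ i, |ρ i| ≤ ∑ i, |μ i| + γ * ∑ i, |ρ i| :=
    calc ∑ i, |ρ i| ≤ ∑ i, (|μ i| + γ * |(ρ ᵥ* K) i|) := sum_le_sum fun i _ => by
          rw [congrFun hρ i, Pi.add_apply, Pi.smul_apply, smul_eq_mul]
          exact (abs_add_le _ _).trans_eq (by rw [abs_mul, abs_of_nonneg hγ0])
      _ ≤ ∑ i, |μ i| + γ * ∑ i, |ρ i| := by
        rw [sum_add_distrib, ← mul_sum]
        gcongr _ + γ * ?_
        exact sum_abs_vecMul_le_of_mem_rowStochastic hK ρ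
  rw [le_div_iff₀ (by linarith)]
  linarith

end Stochastic

lemma dotProduct_eq_of_eq_add_smul {n : Type*} [Fintype n] {ρ μ x f : n → ℝ}
    {M M' : Matrix n n ℝ} {γ : ℝ} (hρ : ρ = μ + γ • (ρ ᵥ* M)) (hx : x = f + γ • (M' *ᵥ x)) :
    μ ⬝ᵥ x = ρ ⬝ᵥ f + γ * ρ ⬝ᵥ ((M' - M) *ᵥ x) := by
  rw [eq_sub_of_add_eq hρ.symm, eq_sub_of_add_eq hx.symm, sub_mulVec, sub_dotProduct,
    dotProduct_sub, dotProduct_sub, smul_dotProduct, dotProduct_smul, ← dotProduct_mulVec,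
    smul_eq_mul, smul_eq_mul]
  ring

namespace MDP

variable {S A : Type*} [Fintype A] (P : S → A → S → ℝ)

def stateKernel (π : S → A → ℝ) : Matrix S S ℝ := fun s s' => ∑ a, π s a * P s a s'

lemma stateKernel_sub (π π' : S → A → ℝ) :
    stateKernel P π' - stateKernel P π = stateKernel P (π' - π) := by
  ext s s'
  simp only [stateKernel, Matrix.sub_apply, Pi.sub_apply, sub_mul, sum_sub_distrib]

variable [Fintype S]

lemma stateKernel_mulVec_apply (π : S → A → ℝ) (v : S → ℝ) (s : S) :
    (stateKernel P π *ᵥ v) s = ∑ a, π s a * (P s a ⬝ᵥ v) := by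
  simp only [mulVec, dotProduct, stateKernel, mul_sum, sum_mul, mul_assoc]
  exact sum_comm

lemma vecMul_stateKernel_apply (π : S → A → ℝ) (ρ : S → ℝ) (s : S) :
    (ρ ᵥ* stateKernel P π) s = ∑ s', ∑ a, ρ s' * π s' a * P s' a s := by
  simp only [vecMul, dotProduct, stateKernel, mul_sum, mul_assoc]

lemma stateKernel_mem_rowStochastic [DecidableEq S] {π : S → A → ℝ}
    (hP0 : ∀ s a s', 0 ≤ P s a s') (hP1 : ∀ s a, ∑ s', P s a s' = 1)
    (hπ0 : ∀ s a, 0 ≤ π s a) (hπ1 : ∀ s, ∑ a, π s a = 1) :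
    stateKernel P π ∈ rowStochastic ℝ S := by
  refine mem_rowStochastic.2 ⟨fun s s' => sum_nonneg fun a _ => mul_nonneg (hπ0 s a) (hP0 s a s'),
    funext fun s => ?_⟩
  simp only [stateKernel_mulVec_apply, dotProduct_one, hP1, mul_one, hπ1, Pi.one_apply]

lemma norm_stateKernel_mulVec_le [Nonempty S] {ν : S → A → ℝ} {β : ℝ}
    (hP0 : ∀ s a s', 0 ≤ P s a s') (hP1 : ∀ s a, ∑ s', P s a s' = 1)
    (hν : ∀ s, ∑ a, |ν s a| ≤ β) (v : S → ℝ) :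
    ‖stateKernel P ν *ᵥ v‖ ≤ β * ‖v‖ := by
  refine (pi_norm_le_iff_of_nonempty _).2 fun s => ?_
  rw [Real.norm_eq_abs, stateKernel_mulVec_apply]
  exact (abs_sum_mul_le_sum_abs_mul _ _ _ fun a _ =>
    abs_dotProduct_le_norm_of_sum_eq_one (hP0 s a) (hP1 s a) v).trans (by gcongr; exact hν s)

variable {R : S → A → ℝ} {γ : ℝ} {V : S → ℝ} {Adv : S → A → ℝ}

lemma sum_mul_advantage_eq_zero {π : S → A → ℝ} (hπ1 : ∀ s, ∑ a, π s a = 1)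
    (hV : ∀ s, V s = ∑ a, π s a * (R s a + γ * P s a ⬝ᵥ V))
    (hAdv : ∀ s a, Adv s a = R s a + γ * P s a ⬝ᵥ V - V s) (s : S) :
    ∑ a, π s a * Adv s a = 0 := by
  simp only [hAdv, mul_sub, sum_sub_distrib, ← sum_mul, hπ1, one_mul, ← hV s, sub_self]

lemma value_sub_eq_add_smul_stateKernel_mulVec {π' : S → A → ℝ} {V' : S → ℝ}
    (hπ'1 : ∀ s, ∑ a, π' s a = 1)
    (hV' : ∀ s, V' s = ∑ a, π' s a * (R s a + γ * P s a ⬝ᵥ V'))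
    (hAdv : ∀ s a, Adv s a = R s a + γ * P s a ⬝ᵥ V - V s) :
    V' - V = (fun s => ∑ a, π' s a * Adv s a) + γ • (stateKernel P π' *ᵥ (V' - V)) := by
  funext s
  have hVs : V s = ∑ a, π' s a * V s := by rw [← sum_mul, hπ'1, one_mul]
  simp only [Pi.add_apply, Pi.sub_apply, Pi.smul_apply, smul_eq_mul, stateKernel_mulVec_apply,
    dotProduct_sub, hAdv, mul_sum]
  rw [hV' s]
  nth_rewrite 1 [hVs]
  rw [← sum_sub_distrib, ← sum_add_distrib]
  exact sum_congr rfl fun a _ => by ring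

lemma norm_sum_mul_advantage_le [Nonempty S] [Nonempty A] {π π' : S → A → ℝ} {ε β : ℝ}
    (hmean : ∀ s, ∑ a, π s a * Adv s a = 0) (hε : ∀ s a, |Adv s a| ≤ ε)
    (hβ : ∀ s, ∑ a, |π' s a - π s a| ≤ β) :
    ‖fun s => ∑ a, π' s a * Adv s a‖ ≤ β * ε := by
  refine (pi_norm_le_iff_of_nonempty _).2 fun s => ?_
  rw [Real.norm_eq_abs, ← sub_zero (∑ a, π' s a * Adv s a), ← hmean s, ← sum_sub_distrib]
  simp_rw [← sub_mul]
  exact (abs_sum_mul_le_sum_abs_mul _ _ _ fun a _ => hε s a).trans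
    (by gcongr
        · exact (abs_nonneg _).trans (hε s (Classical.arbitrary A))
        · exact hβ s)

theorem abs_performance_difference_sub_surrogate_le [Nonempty S] [Nonempty A] [DecidableEq S]
    {π π' : S → A → ℝ} {V' μ ρ : S → ℝ} {ε β : ℝ}
    (hP0 : ∀ s a s', 0 ≤ P s a s') (hP1 : ∀ s a, ∑ s', P s a s' = 1)
    (hπ0 : ∀ s a, 0 ≤ π s a) (hπ1 : ∀ s, ∑ a, π s a = 1)
    (hπ'0 : ∀ s a, 0 ≤ π' s a) (hπ'1 : ∀ s, ∑ a, π' s a = 1)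
    (hγ0 : 0 ≤ γ) (hγ1 : γ < 1) (hμ0 : ∀ s, 0 ≤ μ s) (hμ1 : ∑ s, μ s = 1)
    (hV : ∀ s, V s = ∑ a, π s a * (R s a + γ * P s a ⬝ᵥ V))
    (hV' : ∀ s, V' s = ∑ a, π' s a * (R s a + γ * P s a ⬝ᵥ V'))
    (hρ : ρ = μ + γ • (ρ ᵥ* stateKernel P π))
    (hAdv : ∀ s a, Adv s a = R s a + γ * P s a ⬝ᵥ V - V s)
    (hε : ∀ s a, |Adv s a| ≤ ε) (hβ : ∀ s, ∑ a, |π' s a - π s a| ≤ β) :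
    |μ ⬝ᵥ (V' - V) - ρ ⬝ᵥ (fun s => ∑ a, π' s a * Adv s a)| ≤
      γ * ε * β ^ 2 / (1 - γ) ^ 2 := by
  obtain ⟨s₀⟩ := ‹Nonempty S›
  have hβ0 : 0 ≤ β := (sum_nonneg fun a _ => abs_nonneg _).trans (hβ s₀)
  have hx := value_sub_eq_add_smul_stateKernel_mulVec P hπ'1 hV' hAdv
  have hAbar := norm_sum_mul_advantage_le (sum_mul_advantage_eq_zero P hπ1 hV hAdv) hε hβ
  have hxnorm : ‖V' - V‖ ≤ β * ε / (1 - γ) :=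
    (norm_le_div_of_eq_add_smul_mulVec (stateKernel_mem_rowStochastic P hP0 hP1 hπ'0 hπ'1)
      hγ0 hγ1 hx).trans (div_le_div_of_nonneg_right hAbar (by linarith))
  have hρ1 : ∑ s, |ρ s| ≤ 1 / (1 - γ) := by
    simpa only [abs_of_nonneg (hμ0 _), hμ1] using sum_abs_le_div_of_eq_add_smul_vecMul
      (stateKernel_mem_rowStochastic P hP0 hP1 hπ0 hπ1) hγ0 hγ1 hρ
  have hdrift (s : S) : |(stateKernel P (π' - π) *ᵥ (V' - V)) s| ≤ β * (β * ε / (1 - γ)) :=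
    (norm_le_pi_norm _ s).trans <| (norm_stateKernel_mulVec_le P hP0 hP1 hβ _).trans
      (mul_le_mul_of_nonneg_left hxnorm hβ0)
  rw [dotProduct_eq_of_eq_add_smul hρ hx, stateKernel_sub, add_sub_cancel_left, abs_mul,
    abs_of_nonneg hγ0]
  calc γ * |ρ ⬝ᵥ (stateKernel P (π' - π) *ᵥ (V' - V))|
      ≤ γ * ((∑ s, |ρ s|) * (β * (β * ε / (1 - γ)))) := by
        gcongr; exact abs_sum_mul_le_sum_abs_mul _ _ _ fun s _ => hdrift s
    _ ≤ γ * (1 / (1 - γ) * (β * (β * ε / (1 - γ)))) := by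
        have hε0 : 0 ≤ ε := (abs_nonneg _).trans (hε s₀ (Classical.arbitrary A))
        have : 0 < 1 - γ := by linarith
        gcongr
    _ = γ * ε * β ^ 2 / (1 - γ) ^ 2 := by field_simp

end MDP

open MDP

/-- **TRPO policy improvement lower bound** (Schulman et al.).
With `ε = max_{s,a} |A_π(s,a)|` and `C = 4εγ/(1−γ)²`,
`J(π') − J(π) ≥ L_π(π') − C · max_s D_KL(π(·|s) ∥ π'(·|s))`,
where `L_π(π') = Σ_s ρ_π(s) Σ_a π'(a|s) A_π(s,a)` is the surrogate advantage
computed under the discounted state-visitation frequency `ρ_π` of `π`. -/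
theorem trpo_policy_improvement_lower_bound
    {S A : Type*} [Fintype S] [Fintype A] [Nonempty S] [Nonempty A]
    (P : S → A → S → ℝ) (R : S → A → ℝ) (γ : ℝ) (μ : S → ℝ)
    (π π' : S → A → ℝ) (V V' ρ : S → ℝ)
    (hγ : 0 < γ) (hγ1 : γ < 1)
    (hP0 : ∀ s a s', 0 ≤ P s a s') (hP1 : ∀ s a, ∑ s', P s a s' = 1)
    (hμ0 : ∀ s, 0 ≤ μ s) (hμ1 : ∑ s, μ s = 1)
    (hπ0 : ∀ s a, 0 ≤ π s a) (hπ1 : ∀ s, ∑ a, π s a = 1)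
    (hπ'0 : ∀ s a, 0 < π' s a) (hπ'1 : ∀ s, ∑ a, π' s a = 1)
    (hV : ∀ s, V s = ∑ a, π s a * (R s a + γ * ∑ s', P s a s' * V s'))
    (hV' : ∀ s, V' s = ∑ a, π' s a * (R s a + γ * ∑ s', P s a s' * V' s'))
    -- discounted state-visitation frequency of π from initial distribution μ
    (hρ : ∀ s, ρ s = μ s + γ * ∑ s', ∑ a, ρ s' * π s' a * P s' a s)
    (Q Adv : S → A → ℝ)
    (hQ : ∀ s a, Q s a = R s a + γ * ∑ s', P s a s' * V s')
    (hAdv : ∀ s a, Adv s a = Q s a - V s)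
    (ε C L maxKL : ℝ)
    (hε : ε = Finset.univ.sup' Finset.univ_nonempty
        (fun sa : S × A => |Adv sa.1 sa.2|))
    (hC : C = 4 * ε * γ / (1 - γ) ^ 2)
    (hL : L = ∑ s, ρ s * ∑ a, π' s a * Adv s a)
    (hmaxKL : maxKL = Finset.univ.sup' Finset.univ_nonempty
        (fun s => ∑ a, π s a * Real.log (π s a / π' s a))) :
    (∑ s, μ s * V' s) - (∑ s, μ s * V s) ≥ L - C * maxKL := by
  classical
  have hAdv' (s : S) (a : A) : Adv s a = R s a + γ * P s a ⬝ᵥ V - V s := by rw [hAdv, hQ]; rfl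
  have hρ' : ρ = μ + γ • (ρ ᵥ* stateKernel P π) :=
    funext fun s => by simp only [hρ s, Pi.add_apply, Pi.smul_apply, smul_eq_mul,
      vecMul_stateKernel_apply]
  have hε' (s : S) (a : A) : |Adv s a| ≤ ε :=
    hε ▸ le_sup' (fun sa : S × A => |Adv sa.1 sa.2|) (mem_univ (s, a))
  have hKL (s : S) : (∑ a, |π' s a - π s a|) ^ 2 ≤ 4 * maxKL := by
    simp_rw [abs_sub_comm (π' s _), hmaxKL]
    exact (sq_sum_abs_sub_le_four_mul_sum_mul_log_div (hπ0 s) (hπ'0 s) (hπ1 s) (hπ'1 s)).trans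
      (by gcongr; exact le_sup' (fun s => ∑ a, π s a * Real.log (π s a / π' s a)) (mem_univ s))
  have hβ (s : S) : ∑ a, |π' s a - π s a| ≤ √(4 * maxKL) :=
    (le_abs_self _).trans (Real.abs_le_sqrt (hKL s))
  have hβsq : √(4 * maxKL) ^ 2 = 4 * maxKL :=
    Real.sq_sqrt ((sq_nonneg _).trans (hKL (Classical.arbitrary S)))
  have hbound := abs_performance_difference_sub_surrogate_le P hP0 hP1 hπ0 hπ1
    (fun s a => (hπ'0 s a).le) hπ'1 hγ.le hγ1 hμ0 hμ1 hV hV' hρ' hAdv' hε' hβ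
  rw [hβsq, dotProduct_sub] at hbound
  have hC' : C * maxKL = γ * ε * (4 * maxKL) / (1 - γ) ^ 2 := by rw [hC]; ring
  rw [ge_iff_le, hC', hL]
  exact sub_le_comm.1 (abs_sub_le_iff.1 hbound).2
end
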